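/- Let n ≥ 1 and p, q ∈ (0,∞]. Let θ ∈ C_0^∞(ℝⁿ). Then there exists a constant c, depending only on n, p, q, and θ, such that for every F ∈ C^∞(𝕋ⁿ) (identified with a smooth 1-periodic function on ℝⁿ): ‖F · (𝓕⁻¹θ)‖_{(L^p,ℓ^q)} ≤ c ‖F‖_{L^p(𝕋ⁿ)}. -/

import Mathlib

open MeasureTheory Real Set
open scoped ENNReal NNReal

noncomputable section

namespace LatticeBump

/-- ℝⁿ as a Euclidean space. -/
abbrev En (n : ℕ) := EuclideanSpace ℝ (Fin n)

/-- ℤⁿ. -/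
abbrev Zn (n : ℕ) := Fin n → ℤ

/-- The lattice point `k ∈ ℤⁿ` viewed as a point of ℝⁿ. -/
def intVec {n : ℕ} (k : Zn n) : En n := WithLp.toLp 2 (fun i => (k i : ℝ))

/-- `e^{2πit}`. -/
def e2πi (t : ℝ) : ℂ := Complex.exp (2 * Real.pi * t * Complex.I)

/-- The dot product on ℝⁿ. -/
def dotE {n : ℕ} (x ξ : En n) : ℝ := ∑ i, x i * ξ i

/-- Fourier transform `f̂(ξ) = ∫ f(x) e^{-2πi x·ξ} dx`. -/
def FT {n : ℕ} (f : En n → ℂ) (ξ : En n) : ℂ := ∫ x, e2πi (-(dotE x ξ)) * f x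

/-- Inverse Fourier transform. -/
def invFT {n : ℕ} (f : En n → ℂ) (x : En n) : ℂ := ∫ ξ, e2πi (dotE x ξ) * f ξ

/-- The bilinear Fourier multiplier operator `T_σ`. -/
def Tbil {n : ℕ} (σ : En n × En n → ℂ) (f₁ f₂ : En n → ℂ) (x : En n) : ℂ :=
  ∫ ξ : En n × En n, e2πi (dotE x (ξ.1 + ξ.2)) * σ ξ * FT f₁ ξ.1 * FT f₂ ξ.2

/-- The lattice bump multiplier `σ_{a,Φ}`. -/
def latticeSymbol {n : ℕ} (a : Zn n × Zn n → ℂ) (Φ : En n × En n → ℂ)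
    (ξ : En n × En n) : ℂ :=
  ∑' μ : Zn n × Zn n, a μ * Φ (ξ.1 - intVec μ.1, ξ.2 - intVec μ.2)

/-- ℓ^q norm (`q ∈ (0,∞]`) of an ℝ≥0∞-valued family. -/
def lqNorm {ι : Type*} (q : ℝ≥0∞) (u : ι → ℝ≥0∞) : ℝ≥0∞ :=
  if q = ∞ then ⨆ i, u i else (∑' i, u i ^ q.toReal) ^ (1 / q.toReal)

/-- L^p norm (`p ∈ (0,∞]`) of an ℝ≥0∞-valued function. -/
def LpNormE {α : Type*} [MeasurableSpace α] (p : ℝ≥0∞) (μ : Measure α)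
    (u : α → ℝ≥0∞) : ℝ≥0∞ :=
  if p = ∞ then essSup u μ else (∫⁻ x, u x ^ p.toReal ∂μ) ^ (1 / p.toReal)

/-- The unit cube `Q = (-1/2, 1/2]ⁿ`. -/
def unitCube (n : ℕ) : Set (En n) := {x | ∀ i, x i ∈ Set.Ioc (-(1:ℝ)/2) (1/2)}

/-- The shifted cube `k + Q`. -/
def shiftedCube {n : ℕ} (k : Zn n) : Set (En n) :=
  {x | ∀ i, x i - (k i : ℝ) ∈ Set.Ioc (-(1:ℝ)/2) (1/2)}

/-- The amalgam space quasi-norm `‖f‖_{(L^p, ℓ^q)}`. -/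
def amalgamNorm {n : ℕ} (p q : ℝ≥0∞) (f : En n → ℂ) : ℝ≥0∞ :=
  lqNorm q (fun k : Zn n => eLpNorm f p (volume.restrict (shiftedCube k)))

/-- Operator quasi-norm of `T_σ` between amalgam spaces (∞ if unbounded). -/
def amalgamOpNorm {n : ℕ} (σ : En n × En n → ℂ) (p₁ p₂ p q₁ q₂ q : ℝ≥0∞) : ℝ≥0∞ :=
  sInf {C : ℝ≥0∞ | ∀ f₁ f₂ : SchwartzMap (En n) ℂ,
    amalgamNorm p q (Tbil σ ⇑f₁ ⇑f₂) ≤ C * amalgamNorm p₁ q₁ ⇑f₁ * amalgamNorm p₂ q₂ ⇑f₂}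

/-- A smooth function on the torus 𝕋ⁿ, identified with a smooth 1-periodic function on ℝⁿ. -/
def IsSmoothPeriodic {n : ℕ} (F : En n → ℂ) : Prop :=
  ContDiff ℝ (⊤ : ℕ∞) F ∧ ∀ (x : En n) (k : Zn n), F (x + intVec k) = F x

/-- Fourier coefficient of a periodic function. -/
def perCoeff {n : ℕ} (F : En n → ℂ) (μ : Zn n) : ℂ :=
  ∫ x in unitCube n, e2πi (-(dotE (intVec μ) x)) * F x

/-- The periodic bilinear Fourier multiplier operator `T^per_a`. -/
def Tper {n : ℕ} (a : Zn n × Zn n → ℂ) (F₁ F₂ : En n → ℂ) (x : En n) : ℂ :=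
  ∑' μ : Zn n × Zn n,
    e2πi (dotE x (intVec μ.1 + intVec μ.2)) * a μ * perCoeff F₁ μ.1 * perCoeff F₂ μ.2

/-- `L^p(𝕋ⁿ)` quasi-norm (over the fundamental domain Q). -/
def perLp {n : ℕ} (p : ℝ≥0∞) (F : En n → ℂ) : ℝ≥0∞ :=
  eLpNorm F p (volume.restrict (unitCube n))

/-- `‖T^per_a‖_{L^{p₁}×L^{p₂}→L^p}`. -/
def perOpNorm {n : ℕ} (a : Zn n × Zn n → ℂ) (p₁ p₂ p : ℝ≥0∞) : ℝ≥0∞ :=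
  ⨆ (F₁ : {F : En n → ℂ // IsSmoothPeriodic F ∧ F ≠ 0})
    (F₂ : {F : En n → ℂ // IsSmoothPeriodic F ∧ F ≠ 0}),
      perLp p (Tper a F₁.1 F₂.1) / (perLp p₁ F₁.1 * perLp p₂ F₂.1)

/-- Condition (B). -/
def CondB {n : ℕ} (Φ : En n × En n → ℂ) : Prop :=
  ∃ ξ0 : En n × En n, Φ ξ0 ≠ 0 ∧
    ∀ μ : Zn n × Zn n, μ ≠ 0 →
      ξ0 ∉ tsupport (fun ξ : En n × En n => Φ (ξ.1 - intVec μ.1, ξ.2 - intVec μ.2))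

/-- `a ∈ ℓ^∞`. -/
def BddSeq {ι : Type*} (a : ι → ℂ) : Prop := ∃ M : ℝ, ∀ i, ‖a i‖ ≤ M

/-- The Fourier multiplier operator `m(D)` realized as convolution with `𝓕⁻¹m`. -/
def mulOp {n : ℕ} (m : En n → ℂ) (g : En n → ℂ) (x : En n) : ℂ :=
  ∫ y, invFT m (x - y) * g y

/-- The Wiener amalgam quasi-norm `‖g‖_{W^{p,q}}` associated with the window `κ`. -/
def wienerNorm {n : ℕ} (κ : En n → ℂ) (p q : ℝ≥0∞) (g : En n → ℂ) : ℝ≥0∞ :=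
  LpNormE p volume (fun x =>
    lqNorm q (fun k : Zn n => (‖mulOp (fun ξ => κ (ξ - intVec k)) g x‖₊ : ℝ≥0∞)))

/-- An admissible window for Wiener amalgam spaces:
`κ ∈ C_0^∞` with `|∑_k κ(ξ-k)| ≥ 1`. -/
def AdmissibleWindow {n : ℕ} (κ : En n → ℂ) : Prop :=
  ContDiff ℝ (⊤ : ℕ∞) κ ∧ HasCompactSupport κ ∧
    ∀ ξ : En n, 1 ≤ ‖∑' k : Zn n, κ (ξ - intVec k)‖

/-- Operator quasi-norm of `T_σ` between Wiener amalgam spaces. -/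
def wienerOpNorm {n : ℕ} (κ : En n → ℂ) (σ : En n × En n → ℂ)
    (p₁ p₂ p q₁ q₂ q : ℝ≥0∞) : ℝ≥0∞ :=
  sInf {C : ℝ≥0∞ | ∀ f₁ f₂ : SchwartzMap (En n) ℂ,
    wienerNorm κ p q (Tbil σ ⇑f₁ ⇑f₂)
      ≤ C * wienerNorm κ p₁ q₁ ⇑f₁ * wienerNorm κ p₂ q₂ ⇑f₂}

/-- The discrete bilinear operator `S_a`. -/
def Sa {n : ℕ} (a : Zn n × Zn n → ℂ) (b₁ b₂ : Zn n → ℂ) (μ : Zn n) : ℂ :=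
  ∑' ν : Zn n, a (ν, μ - ν) * b₁ ν * b₂ (μ - ν)

/-- ℓ^q quasi-norm of a complex sequence on ℤⁿ. -/
def seqLq {n : ℕ} (q : ℝ≥0∞) (b : Zn n → ℂ) : ℝ≥0∞ :=
  lqNorm q (fun μ => (‖b μ‖₊ : ℝ≥0∞))

/-- `‖S_a‖_{ℓ^{q₁}×ℓ^{q₂}→ℓ^q}`: supremum over nonzero finitely supported sequences. -/
def SaOpNorm {n : ℕ} (a : Zn n × Zn n → ℂ) (q₁ q₂ q : ℝ≥0∞) : ℝ≥0∞ :=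
  ⨆ (b₁ : {b : Zn n → ℂ // (Function.support b).Finite ∧ b ≠ 0})
    (b₂ : {b : Zn n → ℂ // (Function.support b).Finite ∧ b ≠ 0}),
      seqLq q (Sa a b₁.1 b₂.1) / (seqLq q₁ b₁.1 * seqLq q₂ b₂.1)


/-!
Hölder's inequality on each cube `k + Q` bounds `‖F g‖_{L^p(k+Q)}` by
`‖g‖_{L^∞(k+Q)} ‖F‖_{L^p(k+Q)}`, and periodicity turns the last factor into `‖F‖_{L^p(𝕋ⁿ)}`;
hence `‖F g‖_{(L^p,ℓ^q)} ≤ ‖g‖_{(L^∞,ℓ^q)} ‖F‖_{L^p(𝕋ⁿ)}`. For `g = 𝓕⁻¹θ`, a Schwartz function,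
`sup_{k+Q} |g|` decays like `∏ᵢ (1 + |kᵢ|)^{-m}` for every `m`, which is `q`-th power summable
over `ℤⁿ` once `m q ≥ 2`.
-/

open scoped FourierTransform SchwartzMap

theorem lqNorm_mono {ι : Type*} (q : ℝ≥0∞) {u v : ι → ℝ≥0∞} (h : ∀ i, u i ≤ v i) :
    lqNorm q u ≤ lqNorm q v := by
  unfold lqNorm
  split
  · exact iSup_mono h
  · gcongr with i
    exact h i

theorem lqNorm_mul_const {ι : Type*} {q : ℝ≥0∞} (hq : q ≠ 0) (u : ι → ℝ≥0∞) (t : ℝ≥0∞) :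
    lqNorm q (fun i => u i * t) = lqNorm q u * t := by
  unfold lqNorm
  split_ifs with hq_top
  · exact (ENNReal.iSup_mul u t).symm
  · have hr : q.toReal ≠ 0 := (ENNReal.toReal_pos hq hq_top).ne'
    simp_rw [ENNReal.mul_rpow_of_nonneg _ _ ENNReal.toReal_nonneg, ENNReal.tsum_mul_right,
      ENNReal.mul_rpow_of_nonneg _ _ (one_div_nonneg.2 ENNReal.toReal_nonneg)]
    rw [← ENNReal.rpow_mul, mul_one_div_cancel hr, ENNReal.rpow_one]

theorem _root_.ENNReal.tsum_pi_prod_eq_pow {α : Type*} (f : α → ℝ≥0∞) (N : ℕ) :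
    ∑' k : Fin N → α, ∏ i, f (k i) = (∑' a, f a) ^ N := by
  induction N with
  | zero => simp
  | succ N ih =>
    rw [← (Fin.consEquiv fun _ : Fin (N + 1) => α).tsum_eq, ENNReal.tsum_prod', pow_succ']
    simp only [Fin.consEquiv_apply, Fin.prod_univ_succ, Fin.cons_zero, Fin.cons_succ,
      ENNReal.tsum_mul_left, ih, ENNReal.tsum_mul_right]

variable {n : ℕ}

theorem measurableSet_shiftedCube (k : Zn n) : MeasurableSet (shiftedCube k) := by
  have h : shiftedCube k = ⋂ i, (fun x : En n => x i - (k i : ℝ)) ⁻¹' Ioc (-(1:ℝ)/2) (1/2) := by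
    ext x; simp [shiftedCube]
  rw [h]
  exact MeasurableSet.iInter fun i => (by fun_prop : Measurable fun x : En n => x i - (k i : ℝ))
    measurableSet_Ioc

theorem preimage_add_intVec_shiftedCube (k : Zn n) :
    (· + intVec k) ⁻¹' shiftedCube k = unitCube n := by
  ext x
  simp [shiftedCube, unitCube, intVec]

theorem map_add_intVec_restrict_unitCube (k : Zn n) :
    (volume.restrict (unitCube n)).map (· + intVec k) = volume.restrict (shiftedCube k) := by
  rw [← preimage_add_intVec_shiftedCube k,
    ← Measure.restrict_map (measurable_add_const _) (measurableSet_shiftedCube k),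
    map_add_right_eq_self]

theorem eLpNorm_restrict_shiftedCube_eq_perLp (p : ℝ≥0∞) {F : En n → ℂ}
    (hF : ∀ (x : En n) (k : Zn n), F (x + intVec k) = F x) (k : Zn n) :
    eLpNorm F p (volume.restrict (shiftedCube k)) = perLp p F := by
  rw [← map_add_intVec_restrict_unitCube k,
    (measurableEmbedding_addRight (intVec k)).eLpNorm_map_measure]
  exact congrArg (eLpNorm · p _) (funext fun x => hF x k)

theorem amalgamNorm_mul_le {p q : ℝ≥0∞} (hq : q ≠ 0) {F : En n → ℂ} (g : En n → ℂ)
    (hF_meas : AEStronglyMeasurable F volume)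
    (hF : ∀ (x : En n) (k : Zn n), F (x + intVec k) = F x) :
    amalgamNorm p q (fun x => F x * g x) ≤ amalgamNorm ∞ q g * perLp p F := by
  unfold amalgamNorm
  rw [← lqNorm_mul_const hq]
  refine lqNorm_mono q fun k => ?_
  calc eLpNorm (fun x => F x * g x) p (volume.restrict (shiftedCube k))
      ≤ 1 * eLpNorm F p (volume.restrict (shiftedCube k)) *
          eLpNorm g ∞ (volume.restrict (shiftedCube k)) :=
        eLpNorm_le_eLpNorm_mul_eLpNorm_top p hF_meas.restrict g (· * ·) 1
          (.of_forall fun x => by simp [nnnorm_mul])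
    _ = eLpNorm g ∞ (volume.restrict (shiftedCube k)) * perLp p F := by
        rw [one_mul, mul_comm, eLpNorm_restrict_shiftedCube_eq_perLp p hF]

/-- A product weight, so that sums of its powers over `ℤⁿ` factor into one-dimensional sums. -/
def latticeWeight (k : Zn n) : ℝ := ∏ i, (1 + |(k i : ℝ)|)

theorem one_le_latticeWeight (k : Zn n) : 1 ≤ latticeWeight k :=
  Finset.one_le_prod fun _ _ => le_add_of_nonneg_right (abs_nonneg _)

theorem latticeWeight_pos (k : Zn n) : 0 < latticeWeight k :=
  zero_lt_one.trans_le (one_le_latticeWeight k)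

theorem latticeWeight_le_of_mem_shiftedCube {k : Zn n} {x : En n} (hx : x ∈ shiftedCube k) :
    latticeWeight k ≤ (2 * (1 + ‖x‖)) ^ n := by
  calc latticeWeight k ≤ ∏ _i : Fin n, 2 * (1 + ‖x‖) := by
        refine Finset.prod_le_prod (fun i _ => by positivity) fun i _ => ?_
        have hxi : |x i| ≤ ‖x‖ := by simpa using PiLp.norm_apply_le x i
        have hki : |x i - k i| ≤ 1 := abs_le.2 ⟨by linarith [(hx i).1], by linarith [(hx i).2]⟩
        have := abs_sub_abs_le_abs_sub (k i : ℝ) (x i)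
        rw [abs_sub_comm] at this
        linarith [norm_nonneg x]
    _ = (2 * (1 + ‖x‖)) ^ n := by simp

theorem tsum_one_add_abs_sq_inv_ne_top :
    ∑' j : ℤ, ENNReal.ofReal ((1 + |(j : ℝ)|) ^ 2)⁻¹ ≠ ∞ := by
  have hnat : Summable fun m : ℕ => ((1 + (m : ℝ)) ^ 2)⁻¹ := by
    simpa [add_comm] using
      (summable_nat_add_iff 1).2 (Real.summable_nat_pow_inv.2 one_lt_two)
  have hint : Summable fun j : ℤ => ((1 + |(j : ℝ)|) ^ 2)⁻¹ :=
    .of_nat_of_neg (by simpa using hnat) (by simpa using hnat)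
  rw [← ENNReal.ofReal_tsum_of_nonneg (fun j => by positivity) hint]
  exact ENNReal.ofReal_ne_top

theorem tsum_latticeWeight_sq_inv_ne_top :
    ∑' k : Zn n, ENNReal.ofReal (latticeWeight k ^ 2)⁻¹ ≠ ∞ := by
  have hprod : ∀ k : Zn n, ENNReal.ofReal (latticeWeight k ^ 2)⁻¹ =
      ∏ i, ENNReal.ofReal ((1 + |(k i : ℝ)|) ^ 2)⁻¹ := fun k => by
    rw [latticeWeight, ← Finset.prod_pow, ← Finset.prod_inv_distrib,
      ENNReal.ofReal_prod_of_nonneg fun i _ => by positivity]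
  simp_rw [hprod, ENNReal.tsum_pi_prod_eq_pow fun j : ℤ => ENNReal.ofReal ((1 + |(j : ℝ)|) ^ 2)⁻¹]
  exact ENNReal.pow_ne_top tsum_one_add_abs_sq_inv_ne_top

theorem exists_eLpNorm_top_restrict_shiftedCube_le (g : 𝓢(En n, ℂ)) (m : ℕ) :
    ∃ C : ℝ, 0 ≤ C ∧ ∀ k : Zn n,
      eLpNorm g ∞ (volume.restrict (shiftedCube k)) ≤ ENNReal.ofReal (C / latticeWeight k ^ m) := by
  obtain ⟨C₀, hdecay⟩ : ∃ C₀ : ℝ, ∀ x, (1 + ‖x‖) ^ (n * m) * ‖g x‖ ≤ C₀ :=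
    ⟨_, fun x => by
      simpa using
        SchwartzMap.one_add_le_sup_seminorm_apply (𝕜 := ℝ) (m := (n * m, 0)) le_rfl le_rfl g x⟩
  have hC₀ : 0 ≤ C₀ := (by positivity : (0 : ℝ) ≤ _).trans (hdecay 0)
  refine ⟨2 ^ (n * m) * C₀, by positivity, fun k => ?_⟩
  rw [eLpNorm_exponent_top]
  refine eLpNormEssSup_le_of_ae_bound (ae_restrict_of_forall_mem (measurableSet_shiftedCube k)
    fun x hx => ?_)
  rw [le_div_iff₀ (pow_pos (latticeWeight_pos k) m)]
  calc ‖g x‖ * latticeWeight k ^ m ≤ ‖g x‖ * (2 * (1 + ‖x‖)) ^ (n * m) := by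
        rw [pow_mul]
        gcongr
        · exact (latticeWeight_pos k).le
        · exact latticeWeight_le_of_mem_shiftedCube hx
    _ = 2 ^ (n * m) * ((1 + ‖x‖) ^ (n * m) * ‖g x‖) := by rw [mul_pow]; ring
    _ ≤ 2 ^ (n * m) * C₀ := by gcongr; exact hdecay x

theorem div_latticeWeight_pow_rpow_le {C r : ℝ} (hC : 0 ≤ C) {m : ℕ}
    (hm : 2 ≤ m * r) (k : Zn n) :
    (C / latticeWeight k ^ m) ^ r ≤ C ^ r * (latticeWeight k ^ 2)⁻¹ := by
  have hW := one_le_latticeWeight k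
  have hW₀ := (latticeWeight_pos k).le
  rw [Real.div_rpow hC (pow_nonneg hW₀ m), div_eq_mul_inv, ← Real.rpow_natCast_mul hW₀]
  gcongr
  exact_mod_cast Real.rpow_le_rpow_of_exponent_le hW hm

theorem amalgamNorm_top_lt_top (g : 𝓢(En n, ℂ)) (q : ℝ≥0∞) :
    amalgamNorm ∞ q g < ∞ := by
  unfold amalgamNorm lqNorm
  split_ifs with hq_top
  · obtain ⟨C, -, hC⟩ := exists_eLpNorm_top_restrict_shiftedCube_le g 0
    simp only [pow_zero, div_one] at hC
    exact (iSup_le hC).trans_lt ENNReal.ofReal_lt_top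
  obtain hr | hr := (ENNReal.toReal_nonneg (a := q)).eq_or_lt
  · simp [← hr] -- `q = 0`: the junk exponent `1 / 0 = 0` makes the norm `1`
  set m := ⌈2 / q.toReal⌉₊
  have hm : 2 ≤ m * q.toReal := (div_le_iff₀ hr).1 (Nat.le_ceil _)
  obtain ⟨C, hC₀, hC⟩ := exists_eLpNorm_top_restrict_shiftedCube_le g m
  have hterm : ∀ k, eLpNorm g ∞ (volume.restrict (shiftedCube k)) ^ q.toReal ≤
      ENNReal.ofReal (C ^ q.toReal) * ENNReal.ofReal (latticeWeight k ^ 2)⁻¹ := fun k => by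
    have hCk : 0 ≤ C / latticeWeight k ^ m := div_nonneg hC₀ (pow_nonneg (latticeWeight_pos k).le m)
    grw [hC k, ENNReal.ofReal_rpow_of_nonneg hCk hr.le, ← ENNReal.ofReal_mul (by positivity)]
    exact ENNReal.ofReal_le_ofReal (div_latticeWeight_pow_rpow_le hC₀ hm k)
  refine ENNReal.rpow_lt_top_of_nonneg (by positivity)
    (ne_top_of_le_ne_top ?_ (ENNReal.tsum_le_tsum hterm))
  rw [ENNReal.tsum_mul_left]
  exact ENNReal.mul_ne_top ENNReal.ofReal_ne_top tsum_latticeWeight_sq_inv_ne_top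

theorem exists_schwartzMap_coe_eq_invFT {θ : En n → ℂ} (hθsm : ContDiff ℝ (⊤ : ℕ∞) θ)
    (hθc : HasCompactSupport θ) : ∃ g : 𝓢(En n, ℂ), ⇑g = invFT θ := by
  refine ⟨𝓕⁻ (hθc.toSchwartzMap hθsm), ?_⟩
  ext x
  rw [SchwartzMap.fourierInv_coe, Real.fourierInv_eq']
  refine integral_congr_ae (.of_forall fun ξ => ?_)
  simp only [e2πi, dotE, smul_eq_mul, PiLp.inner_apply, RCLike.inner_apply, conj_trivial]
  push_cast
  ring_nf
  rfl

theorem statement18_general (n : ℕ) (p q : ℝ≥0∞) (hq : 0 < q)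
    (θ : En n → ℂ) (hθsm : ContDiff ℝ (⊤ : ℕ∞) θ) (hθc : HasCompactSupport θ) :
    ∃ c : ℝ≥0∞, 0 < c ∧ c < ∞ ∧
      ∀ F : En n → ℂ, IsSmoothPeriodic F →
        amalgamNorm p q (fun x => F x * invFT θ x) ≤ c * perLp p F := by
  obtain ⟨g, hg⟩ := exists_schwartzMap_coe_eq_invFT hθsm hθc
  refine ⟨amalgamNorm ∞ q (invFT θ) + 1, by positivity, ?_, fun F hF => ?_⟩
  · rw [← hg]
    exact ENNReal.add_lt_top.2 ⟨amalgamNorm_top_lt_top g q, ENNReal.one_lt_top⟩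
  calc amalgamNorm p q (fun x => F x * invFT θ x)
      ≤ amalgamNorm ∞ q (invFT θ) * perLp p F :=
        amalgamNorm_mul_le hq.ne' _ hF.1.continuous.aestronglyMeasurable hF.2
    _ ≤ (amalgamNorm ∞ q (invFT θ) + 1) * perLp p F := by gcongr; exact le_self_add

/-- Multiplying a smooth periodic function by `𝓕⁻¹θ` lands in the amalgam space,
with norm controlled by the `L^p(𝕋ⁿ)` norm. -/
theorem statement18 (n : ℕ) (hn : 1 ≤ n) (p q : ℝ≥0∞) (hp : 0 < p) (hq : 0 < q)
    (θ : En n → ℂ) (hθsm : ContDiff ℝ (⊤ : ℕ∞) θ) (hθc : HasCompactSupport θ) :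
    ∃ c : ℝ≥0∞, 0 < c ∧ c < ∞ ∧
      ∀ F : En n → ℂ, IsSmoothPeriodic F →
        amalgamNorm p q (fun x => F x * invFT θ x) ≤ c * perLp p F :=
  statement18_general n p q hq θ hθsm hθc

end LatticeBump
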